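/- arXiv:1907.05930 — 5 statements merged into one kernel-verified Lean document; each statement's English description precedes it below -/
import Mathlib

section
/- Let X be a complex Banach space and T : X → X a bounded linear operator. Then T is a recurrent operator if and only if the set Rec(T) of recurrent vectors for T is dense in X (i.e., its closure is all of X). In particular, if T is recurrent, then Rec(T) is a dense Gδ subset of X. -/
/-!
A point `x` is recurrent for a continuous map `f` as soon as, for every `ε > 0`, some positive
iterate brings it back within `ε`: by continuity such returns automatically occur at arbitrarily
large times. Hence `Rec(T)` is the countable intersection of the open sets
`{x | ∃ n > 0, ‖Tⁿx - x‖ < 1/(m+1)}`. Recurrence of `T`, applied to a small ball inside a given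
open set, makes each of them dense, so `Rec(T)` is a dense Gδ by Baire's theorem. Conversely, a
recurrent vector in an open set `U` returns to `U`.
-/

open Filter Topology

/-- A bounded linear operator `T` on a Banach space is *recurrent* if for each nonempty open
subset `U` there exists a positive integer `n` with `T^n(U) ∩ U ≠ ∅`. -/
def IsRecurrentOp {X : Type*} [NormedAddCommGroup X] [NormedSpace ℂ X]
    (T : X →L[ℂ] X) : Prop :=
  ∀ U : Set X, IsOpen U → U.Nonempty → ∃ n : ℕ, 0 < n ∧ ((T ^ n) '' U ∩ U).Nonempty

/-- The set of recurrent vectors for `T`: vectors `x` such that `T^{k_n} x → x` for some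
strictly increasing sequence of positive integers `(k_n)`. -/
def recVectors {X : Type*} [NormedAddCommGroup X] [NormedSpace ℂ X]
    (T : X →L[ℂ] X) : Set X :=
  {x | ∃ k : ℕ → ℕ, StrictMono k ∧ (∀ n, 0 < k n) ∧
    Tendsto (fun n => (T ^ k n) x) atTop (𝓝 x)}

open Function

section Recurrence

variable {X : Type*}

def TopologicallyRecurrent [TopologicalSpace X] (f : X → X) : Prop :=
  ∀ U : Set X, IsOpen U → U.Nonempty → ∃ n : ℕ, 0 < n ∧ (f^[n] '' U ∩ U).Nonempty

def recurrentSet [TopologicalSpace X] (f : X → X) : Set X :=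
  {x | ∃ k : ℕ → ℕ, StrictMono k ∧ (∀ n, 0 < k n) ∧ Tendsto (fun n => f^[k n] x) atTop (𝓝 x)}

def nearReturnSet [PseudoMetricSpace X] (f : X → X) (ε : ℝ) : Set X :=
  {x | ∃ n : ℕ, 0 < n ∧ dist (f^[n] x) x < ε}

theorem TopologicallyRecurrent.of_dense_recurrentSet [TopologicalSpace X] {f : X → X}
    (h : Dense (recurrentSet f)) : TopologicallyRecurrent f := by
  intro U hU hUne
  obtain ⟨x, hxU, k, -, hk_pos, hk⟩ := h.inter_open_nonempty U hU hUne
  obtain ⟨n, hn⟩ := (hk.eventually (hU.mem_nhds hxU)).exists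
  exact ⟨k n, hk_pos n, _, ⟨x, hxU, rfl⟩, hn⟩

/-- Returns to every neighbourhood at positive times force returns at arbitrarily large times:
if `f^[m] x ∈ U`, a return of `x` to the neighbourhood `f^[m] ⁻¹' U` at time `n` gives a return
to `U` at time `m + n`. -/
theorem Continuous.mapClusterPt_iterate [TopologicalSpace X] {f : X → X} {x : X}
    (hf : Continuous f) (h : ∀ U : Set X, IsOpen U → x ∈ U → ∃ n, 0 < n ∧ f^[n] x ∈ U) :
    MapClusterPt x atTop (f^[·] x) := by
  rw [(nhds_basis_opens x).mapClusterPt_iff_frequently]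
  rintro U ⟨hxU, hU⟩
  rw [frequently_atTop]
  intro N
  induction N generalizing U with
  | zero =>
    obtain ⟨n, -, hn⟩ := h U hU hxU
    exact ⟨n, n.zero_le, hn⟩
  | succ N ih =>
    obtain ⟨m, hm, hmU⟩ := h U hU hxU
    obtain ⟨n, hn, hnU⟩ := ih (f^[m] ⁻¹' U) hmU (hU.preimage (hf.iterate m))
    exact ⟨m + n, by omega, by rwa [iterate_add_apply]⟩

theorem Continuous.mem_recurrentSet [TopologicalSpace X] [FirstCountableTopology X]
    {f : X → X} {x : X} (hf : Continuous f)
    (h : ∀ U : Set X, IsOpen U → x ∈ U → ∃ n, 0 < n ∧ f^[n] x ∈ U) :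
    x ∈ recurrentSet f := by
  obtain ⟨ψ, hψ, hψx⟩ := (hf.mapClusterPt_iterate h).tendsto_subseq
  refine ⟨fun n => ψ (n + 1), hψ.comp (strictMono_id.add_const 1),
    fun n => (Nat.zero_le _).trans_lt (hψ n.succ_pos), ?_⟩
  exact (tendsto_add_atTop_iff_nat 1).2 hψx

section PseudoMetric

variable [PseudoMetricSpace X] {f : X → X}

theorem isOpen_nearReturnSet (hf : Continuous f) (ε : ℝ) : IsOpen (nearReturnSet f ε) := by
  simp only [nearReturnSet, Set.ofPred_exists, Set.ofPred_and]
  exact isOpen_iUnion fun n => isOpen_const.inter <|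
    isOpen_lt ((hf.iterate n).dist continuous_id) continuous_const

theorem dense_nearReturnSet (h : TopologicallyRecurrent f) {ε : ℝ} (hε : 0 < ε) :
    Dense (nearReturnSet f ε) := by
  rw [dense_iff_inter_open]
  rintro U hU ⟨y, hyU⟩
  obtain ⟨n, hn, -, ⟨z, ⟨hzU, hzy⟩, rfl⟩, -, hfzy⟩ :=
    h (U ∩ Metric.ball y (ε / 2)) (hU.inter Metric.isOpen_ball)
      ⟨y, hyU, Metric.mem_ball_self (half_pos hε)⟩
  refine ⟨z, hzU, n, hn, ?_⟩
  calc dist (f^[n] z) z ≤ dist (f^[n] z) y + dist z y := dist_triangle_right _ _ _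
    _ < ε / 2 + ε / 2 := add_lt_add hfzy hzy
    _ = ε := add_halves ε

theorem recurrentSet_eq_iInter_nearReturnSet (hf : Continuous f) :
    recurrentSet f = ⋂ m : ℕ, nearReturnSet f (1 / (m + 1)) := by
  ext x
  simp only [Set.mem_iInter]
  constructor
  · rintro ⟨k, -, hk_pos, hk⟩ m
    obtain ⟨n, hn⟩ := (hk.eventually (Metric.ball_mem_nhds x Nat.one_div_pos_of_nat)).exists
    exact ⟨k n, hk_pos n, hn⟩
  · intro hx
    refine hf.mem_recurrentSet fun U hU hxU => ?_
    obtain ⟨r, hr, hrU⟩ := Metric.isOpen_iff.1 hU x hxU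
    obtain ⟨m, hm⟩ := exists_nat_one_div_lt hr
    obtain ⟨n, hn, hnx⟩ := hx m
    exact ⟨n, hn, hrU (hnx.trans hm)⟩

theorem isGδ_recurrentSet (hf : Continuous f) : IsGδ (recurrentSet f) := by
  rw [recurrentSet_eq_iInter_nearReturnSet hf]
  exact .iInter fun m => (isOpen_nearReturnSet hf _).isGδ

theorem Continuous.topologicallyRecurrent_iff_dense_recurrentSet [CompleteSpace X]
    (hf : Continuous f) : TopologicallyRecurrent f ↔ Dense (recurrentSet f) := by
  refine ⟨fun h => ?_, TopologicallyRecurrent.of_dense_recurrentSet⟩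
  rw [recurrentSet_eq_iInter_nearReturnSet hf]
  exact dense_iInter_of_isOpen_nat (fun m => isOpen_nearReturnSet hf _)
    (fun m => dense_nearReturnSet h Nat.one_div_pos_of_nat)

end PseudoMetric

end Recurrence

theorem recurrent_iff_dense_recVectors {X : Type*} [NormedAddCommGroup X] [NormedSpace ℂ X]
    [CompleteSpace X] (T : X →L[ℂ] X) :
    (IsRecurrentOp T ↔ Dense (recVectors T)) ∧
      (IsRecurrentOp T → Dense (recVectors T) ∧ IsGδ (recVectors T)) := by
  have hT : IsRecurrentOp T ↔ TopologicallyRecurrent T := by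
    simp only [IsRecurrentOp, TopologicallyRecurrent, FunLike.coe_pow_eq_iterate]
  have hrec : recVectors T = recurrentSet T := by
    simp only [recVectors, recurrentSet, FunLike.coe_pow_eq_iterate]
  rw [hT, hrec, T.continuous.topologicallyRecurrent_iff_dense_recurrentSet]
  exact ⟨.rfl, fun h => ⟨h, isGδ_recurrentSet T.continuous⟩⟩
end

section
/- Let X be a complex Banach space and Γ a set of bounded linear operators on X such that TS ∈ Γ whenever T, S ∈ Γ. Let (λ_T)_{T∈Γ} be a family of unimodular complex numbers (|λ_T| = 1) which is multiplicative, i.e., λ_{TS} = λ_T λ_S for all T, S ∈ Γ. Then a vector x ∈ X is a recurrent vector for Γ if and only if x is a recurrent vector for Γ₁ := { λ_T T : T ∈ Γ }. -/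
/-!
Fix multiplicative maps `φ, ψ` on the semigroup `Γ`, with `φ` unimodular, and let `C ⊆ X × ℂ` be
the closure of `{(ψ T • T x, φ T) : T ∈ Γ}`. It is invariant under the continuous maps
`(y, c) ↦ (ψ T • T y, φ T * c)`, `T ∈ Γ`; consequently the phases `μ` with `(x, μ) ∈ C` form a
closed subsemigroup of the unit circle, nonempty by compactness of the circle as soon as
`ψ T_k • T_k x → x`. By the Ellis–Numakura lemma it contains an idempotent, which can only be `1`,
and `(x, 1) ∈ C` says that `(φ T * ψ T) • T x → x` along some `T ∈ Γ`.
Taking `(φ, ψ) = (λ, 1)` and `(conj λ, λ)` gives the two implications.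
-/

open Filter Topology

/-- A vector `x` is *recurrent* for a set `Γ` of bounded linear operators if there is a
sequence `(T_k)` of operators in `Γ` with `T_k x → x`. -/
def IsRecurrentVector {X : Type*} [NormedAddCommGroup X] [NormedSpace ℂ X]
    (Γ : Set (X →L[ℂ] X)) (x : X) : Prop :=
  ∃ T : ℕ → X →L[ℂ] X, (∀ k, T k ∈ Γ) ∧ Tendsto (fun k => T k x) atTop (𝓝 x)

theorem one_mem_of_isCompact_of_mul_mem {M₀ : Type*} [MonoidWithZero M₀]
    [IsLeftCancelMulZero M₀] [TopologicalSpace M₀] [T2Space M₀] [ContinuousMul M₀] {s : Set M₀}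
    (hne : s.Nonempty) (hs : IsCompact s) (h0 : 0 ∉ s) (hmul : ∀ a ∈ s, ∀ b ∈ s, a * b ∈ s) :
    1 ∈ s := by
  obtain ⟨e, he, hee⟩ :=
    exists_idempotent_in_compact_subsemigroup (continuous_mul_const ·) s hne hs hmul
  obtain rfl | rfl := IsIdempotentElem.iff_eq_zero_or_one.mp hee
  exacts [absurd he h0, he]

section

variable {X : Type*} [NormedAddCommGroup X] [NormedSpace ℂ X] {Γ : Set (X →L[ℂ] X)} {x : X}

theorem isRecurrentVector_iff_mem_closure :
    IsRecurrentVector Γ x ↔ x ∈ closure ((fun T => T x) '' Γ) := by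
  rw [mem_closure_iff_seq_limit]
  constructor
  · rintro ⟨T, hT, hx⟩
    exact ⟨fun k => T k x, fun k => ⟨T k, hT k, rfl⟩, hx⟩
  · rintro ⟨y, hy, hx⟩
    choose T hT hTy using hy
    exact ⟨T, hT, by simpa only [hTy] using hx⟩

theorem isRecurrentVector_smul_iff (lam : (X →L[ℂ] X) → ℂ) :
    IsRecurrentVector {A | ∃ T ∈ Γ, A = lam T • T} x ↔
      x ∈ closure ((fun T => lam T • T x) '' Γ) := by
  have hset : {A | ∃ T ∈ Γ, A = lam T • T} = (fun T => lam T • T) '' Γ := by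
    ext A; simp only [Set.mem_ofPred_eq, Set.mem_image, eq_comm]
  rw [isRecurrentVector_iff_mem_closure, hset, Set.image_image]
  rfl

variable {φ ψ : (X →L[ℂ] X) → ℂ}

def twistedOrbitClosure (Γ : Set (X →L[ℂ] X)) (φ ψ : (X →L[ℂ] X) → ℂ) (x : X) : Set (X × ℂ) :=
  closure ((fun T => (ψ T • T x, φ T)) '' Γ)

theorem mapsTo_twistedOrbitClosure (hΓ : ∀ T ∈ Γ, ∀ S ∈ Γ, T * S ∈ Γ)
    (hφ : ∀ T ∈ Γ, ∀ S ∈ Γ, φ (T * S) = φ T * φ S) (hψ : ∀ T ∈ Γ, ∀ S ∈ Γ, ψ (T * S) = ψ T * ψ S)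
    {T : X →L[ℂ] X} (hT : T ∈ Γ) :
    Set.MapsTo (fun p : X × ℂ => (ψ T • T p.1, φ T * p.2))
      (twistedOrbitClosure Γ φ ψ x) (twistedOrbitClosure Γ φ ψ x) := by
  refine Set.MapsTo.closure ?_ (by fun_prop)
  rintro _ ⟨S, hS, rfl⟩
  refine ⟨T * S, hΓ T hT S hS, ?_⟩
  simp only [hφ T hT S hS, hψ T hT S hS, mul_apply_eq_comp, map_smul, smul_smul]

theorem mul_mem_twistedOrbitClosure (hΓ : ∀ T ∈ Γ, ∀ S ∈ Γ, T * S ∈ Γ)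
    (hφ : ∀ T ∈ Γ, ∀ S ∈ Γ, φ (T * S) = φ T * φ S) (hψ : ∀ T ∈ Γ, ∀ S ∈ Γ, ψ (T * S) = ψ T * ψ S)
    {μ ν : ℂ} (hμ : (x, μ) ∈ twistedOrbitClosure Γ φ ψ x)
    (hν : (x, ν) ∈ twistedOrbitClosure Γ φ ψ x) :
    (x, μ * ν) ∈ twistedOrbitClosure Γ φ ψ x := by
  refine Set.MapsTo.closure_left (f := fun p : X × ℂ => (p.1, p.2 * ν)) ?_ (by fun_prop)
    isClosed_closure hμ
  rintro _ ⟨T, hT, rfl⟩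
  exact mapsTo_twistedOrbitClosure hΓ hφ hψ hT hν

theorem twistedOrbitClosure_subset (hφ : ∀ T ∈ Γ, ‖φ T‖ = 1) :
    twistedOrbitClosure Γ φ ψ x ⊆ {p | ‖p.2‖ = 1} :=
  closure_minimal (Set.image_subset_iff.mpr hφ) (isClosed_eq (by fun_prop) continuous_const)

theorem exists_mem_twistedOrbitClosure (hφ : ∀ T ∈ Γ, ‖φ T‖ = 1)
    (hx : x ∈ closure ((fun T => ψ T • T x) '' Γ)) : ∃ μ, (x, μ) ∈ twistedOrbitClosure Γ φ ψ x := by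
  obtain ⟨y, hy, hyx⟩ := mem_closure_iff_seq_limit.mp hx
  choose T hT hTy using hy
  obtain ⟨μ, -, g, hg, hμ⟩ := (isCompact_sphere (0 : ℂ) 1).tendsto_subseq
    (x := fun k => φ (T k)) fun k => mem_sphere_zero_iff_norm.mpr (hφ _ (hT k))
  refine ⟨μ, mem_closure_of_tendsto ((hyx.comp hg.tendsto_atTop).prodMk_nhds hμ)
    (Eventually.of_forall fun k => ⟨T (g k), hT _, ?_⟩)⟩
  simp only [Function.comp_apply, hTy]

theorem mem_closure_of_one_mem_twistedOrbitClosure (h : (x, 1) ∈ twistedOrbitClosure Γ φ ψ x) :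
    x ∈ closure ((fun T => (φ T * ψ T) • T x) '' Γ) := by
  have hmaps : Set.MapsTo (fun p : X × ℂ => p.2 • p.1) ((fun T => (ψ T • T x, φ T)) '' Γ)
      ((fun T => (φ T * ψ T) • T x) '' Γ) := by
    rintro _ ⟨T, hT, rfl⟩
    exact ⟨T, hT, mul_smul _ _ _⟩
  simpa only [one_smul] using map_mem_closure (by fun_prop) h hmaps

theorem mem_closure_smul_orbit_of_mem_closure (hΓ : ∀ T ∈ Γ, ∀ S ∈ Γ, T * S ∈ Γ)
    (hφ₁ : ∀ T ∈ Γ, ‖φ T‖ = 1) (hφ : ∀ T ∈ Γ, ∀ S ∈ Γ, φ (T * S) = φ T * φ S)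
    (hψ : ∀ T ∈ Γ, ∀ S ∈ Γ, ψ (T * S) = ψ T * ψ S)
    (hx : x ∈ closure ((fun T => ψ T • T x) '' Γ)) :
    x ∈ closure ((fun T => (φ T * ψ T) • T x) '' Γ) := by
  let phases : Set ℂ := {μ | (x, μ) ∈ twistedOrbitClosure Γ φ ψ x}
  have hsphere : phases ⊆ Metric.sphere 0 1 := fun μ hμ => by
    simpa using twistedOrbitClosure_subset hφ₁ hμ
  have hcompact : IsCompact phases :=
    (isCompact_sphere 0 1).of_isClosed_subset (isClosed_closure.preimage (by fun_prop)) hsphere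
  have hone : (1 : ℂ) ∈ phases :=
    one_mem_of_isCompact_of_mul_mem (exists_mem_twistedOrbitClosure hφ₁ hx) hcompact
      (fun h0 => by simpa using hsphere h0)
      fun _ hμ _ hν => mul_mem_twistedOrbitClosure hΓ hφ hψ hμ hν
  exact mem_closure_of_one_mem_twistedOrbitClosure hone

end

theorem recurrentVector_iff_unimodular_smul_general {X : Type*} [NormedAddCommGroup X]
    [NormedSpace ℂ X] (Γ : Set (X →L[ℂ] X))
    (hΓ : ∀ T ∈ Γ, ∀ S ∈ Γ, T * S ∈ Γ)
    (lam : (X →L[ℂ] X) → ℂ)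
    (hmod : ∀ T ∈ Γ, ‖lam T‖ = 1)
    (hmul : ∀ T ∈ Γ, ∀ S ∈ Γ, lam (T * S) = lam T * lam S)
    (x : X) :
    IsRecurrentVector Γ x ↔ IsRecurrentVector {A | ∃ T ∈ Γ, A = lam T • T} x := by
  rw [isRecurrentVector_iff_mem_closure, isRecurrentVector_smul_iff]
  constructor
  · intro h
    simpa only [mul_one, one_smul] using
      mem_closure_smul_orbit_of_mem_closure (ψ := fun _ => 1) hΓ hmod hmul
        (fun _ _ _ _ => (mul_one 1).symm) (by simpa only [one_smul] using h)
  · intro h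
    have hconj := mem_closure_smul_orbit_of_mem_closure (φ := fun T => starRingEnd ℂ (lam T)) hΓ
      (fun T hT => by rw [Complex.norm_conj, hmod T hT])
      (fun T hT S hS => by rw [hmul T hT S hS, map_mul]) hmul h
    rwa [Set.image_congr fun T hT => by
      rw [Complex.conj_mul', hmod T hT, Complex.ofReal_one, one_pow, one_smul]] at hconj

theorem recurrentVector_iff_unimodular_smul {X : Type*} [NormedAddCommGroup X]
    [NormedSpace ℂ X] [CompleteSpace X] (Γ : Set (X →L[ℂ] X))
    (hΓ : ∀ T ∈ Γ, ∀ S ∈ Γ, T * S ∈ Γ)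
    (lam : (X →L[ℂ] X) → ℂ)
    (hmod : ∀ T ∈ Γ, ‖lam T‖ = 1)
    (hmul : ∀ T ∈ Γ, ∀ S ∈ Γ, lam (T * S) = lam T * lam S)
    (x : X) :
    IsRecurrentVector Γ x ↔ IsRecurrentVector {A | ∃ T ∈ Γ, A = lam T • T} x :=
  recurrentVector_iff_unimodular_smul_general Γ hΓ lam hmod hmul x
end

section
/- Let X be a complex Banach space and Γ a set of bounded linear operators on X. Then Γ is recurrent if and only if the set Rec(Γ) of recurrent vectors for Γ is dense in X. -/
open Filter Topology

/-- A set `Γ` of bounded linear operators is *recurrent* if for each nonempty open set `U`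
there exists `T ∈ Γ` with `T(U) ∩ U ≠ ∅`. -/
def IsRecurrentSet {X : Type*} [NormedAddCommGroup X] [NormedSpace ℂ X]
    (Γ : Set (X →L[ℂ] X)) : Prop :=
  ∀ U : Set X, IsOpen U → U.Nonempty → ∃ T ∈ Γ, (T '' U ∩ U).Nonempty

/-
Forward direction by Baire: for `ε > 0` the points moved by less than `ε` by some `T ∈ Γ` form
an open set, and it is dense because a recurrent `Γ` maps some point of any small ball back into
that ball. A point of the dense `G_δ` obtained for `ε = 1/(n+1)`, `n ∈ ℕ`, is recurrent.
Conversely, an open set `U` contains a recurrent vector `x`, and `T_k x ∈ U` for large `k`.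
-/

section

variable {X : Type*} [NormedAddCommGroup X] [NormedSpace ℂ X]

def almostFixedSet (Γ : Set (X →L[ℂ] X)) (ε : ℝ) : Set X :=
  ⋃ T ∈ Γ, {x | dist (T x) x < ε}

theorem isOpen_almostFixedSet (Γ : Set (X →L[ℂ] X)) (ε : ℝ) :
    IsOpen (almostFixedSet Γ ε) :=
  isOpen_biUnion fun _ _ => isOpen_lt (by fun_prop) continuous_const

theorem IsRecurrentSet.dense_almostFixedSet {Γ : Set (X →L[ℂ] X)} (hΓ : IsRecurrentSet Γ)
    {ε : ℝ} (hε : 0 < ε) : Dense (almostFixedSet Γ ε) := by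
  refine dense_iff_inter_open.2 fun U hU ⟨x, hxU⟩ => ?_
  obtain ⟨T, hT, _, ⟨z, ⟨hzU, hzx⟩, rfl⟩, -, hTzx⟩ :=
    hΓ (U ∩ Metric.ball x (ε / 2)) (hU.inter Metric.isOpen_ball)
      ⟨x, hxU, Metric.mem_ball_self (half_pos hε)⟩
  refine ⟨z, hzU, Set.mem_biUnion hT ?_⟩
  calc dist (T z) z ≤ dist (T z) x + dist z x := dist_triangle_right _ _ _
    _ < ε / 2 + ε / 2 := add_lt_add hTzx hzx
    _ = ε := add_halves ε

theorem isRecurrentVector_of_forall_mem_almostFixedSet {Γ : Set (X →L[ℂ] X)} {x : X}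
    (hx : ∀ n : ℕ, x ∈ almostFixedSet Γ (1 / (n + 1))) : IsRecurrentVector Γ x := by
  choose T hTΓ hTx using fun n => Set.mem_iUnion₂.1 (hx n)
  refine ⟨T, hTΓ, tendsto_iff_dist_tendsto_zero.2 ?_⟩
  exact squeeze_zero (fun _ => dist_nonneg) (fun n => (hTx n).le)
    tendsto_one_div_add_atTop_nhds_zero_nat

theorem isRecurrentSet_of_dense {Γ : Set (X →L[ℂ] X)}
    (hd : Dense {x : X | IsRecurrentVector Γ x}) : IsRecurrentSet Γ := by
  intro U hU hne
  obtain ⟨x, ⟨T, hTΓ, hTx⟩, hxU⟩ := hd.exists_mem_open hU hne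
  obtain ⟨k, hk⟩ := (hTx.eventually (hU.mem_nhds hxU)).exists
  exact ⟨T k, hTΓ k, T k x, ⟨x, hxU, rfl⟩, hk⟩

end

theorem recurrentSet_iff_dense_recVectors {X : Type*} [NormedAddCommGroup X]
    [NormedSpace ℂ X] [CompleteSpace X] (Γ : Set (X →L[ℂ] X)) :
    IsRecurrentSet Γ ↔ Dense {x : X | IsRecurrentVector Γ x} := by
  refine ⟨fun hΓ => ?_, isRecurrentSet_of_dense⟩
  have hG : Dense (⋂ n : ℕ, almostFixedSet Γ (1 / (n + 1))) :=
    dense_iInter_of_isOpen (fun _ => isOpen_almostFixedSet Γ _)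
      (fun _ => hΓ.dense_almostFixedSet Nat.one_div_pos_of_nat)
  exact hG.mono fun x hx => isRecurrentVector_of_forall_mem_almostFixedSet (Set.mem_iInter.1 hx)
end

section
/- Let X be a complex Banach space and Γ a set of bounded linear operators on X such that TS ∈ Γ whenever T, S ∈ Γ. Let (λ_T)_{T∈Γ} be a family of unimodular complex numbers (|λ_T| = 1) which is multiplicative, i.e., λ_{TS} = λ_T λ_S for all T, S ∈ Γ. Then Γ is recurrent if and only if Γ₁ := { λ_T T : T ∈ Γ } is recurrent. -/
/-!
Let `G` be a multiplicatively closed set of pairs `(c, T)` with `|c| = 1`. Starting from a small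
open set `V₀`, recurrence of the operators `T` produces open sets `V₀ ⊇ V₁ ⊇ ⋯` and pairs
`(cₙ, Tₙ) ∈ G` with `Tₙ(Vₙ₊₁) ⊆ Vₙ`. For `i < j` the product of the pairs with indices in
`[i, j)` lies in `G`, its operator maps `Vⱼ` into `Vᵢ`, and its scalar is `μⱼ / μᵢ`, where
`μₙ = c₀ ⋯ cₙ₋₁`. By compactness of the unit circle some `μⱼ / μᵢ` is as close to `1` as we
like; the product operator multiplied by this scalar then still returns to the original
open set.
Replacing `(c, T)` by `(c⁻¹, c • T)` exchanges the two sides of the equivalence.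
-/

open Filter Topology

lemma exists_lt_dist_lt_of_isCompact {α : Type*} [PseudoMetricSpace α] {s : Set α}
    (hs : IsCompact s) {u : ℕ → α} (hu : ∀ n, u n ∈ s) {δ : ℝ} (hδ : 0 < δ) :
    ∃ i j, i < j ∧ dist (u j) (u i) < δ := by
  obtain ⟨a, -, φ, hφ, hlim⟩ := hs.tendsto_subseq hu
  obtain ⟨N, hN⟩ := Metric.cauchySeq_iff'.1 hlim.cauchySeq δ hδ
  exact ⟨φ N, φ (N + 1), hφ N.lt_succ_self, hN (N + 1) N.le_succ⟩

lemma exists_isOpen_forall_dist_lt_smul_mem {M Y : Type*} [PseudoMetricSpace M]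
    [TopologicalSpace Y] [SMul M Y] [ContinuousSMul M Y] (c : M) {y : Y} {U : Set Y}
    (hU : IsOpen U) (hy : c • y ∈ U) :
    ∃ δ > 0, ∃ W, IsOpen W ∧ y ∈ W ∧ ∀ w, dist w c < δ → ∀ z ∈ W, w • z ∈ U := by
  have hnhds : (fun p : M × Y => p.1 • p.2) ⁻¹' U ∈ 𝓝 (c, y) :=
    continuous_smul.continuousAt.preimage_mem_nhds (hU.mem_nhds hy)
  obtain ⟨B, hB, W', hW', hsub⟩ := mem_nhds_prod_iff.1 hnhds
  obtain ⟨δ, hδ, hball⟩ := Metric.mem_nhds_iff.1 hB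
  obtain ⟨W, hWW', hW, hyW⟩ := mem_nhds_iff.1 hW'
  exact ⟨δ, hδ, W, hW, hyW, fun w hw z hz => @hsub (w, z) ⟨hball hw, hWW' hz⟩⟩

section Recurrence

variable {X : Type*} [NormedAddCommGroup X] [NormedSpace ℂ X]

lemma IsRecurrentSet.exists_antitone_chain {Γ : Set (X →L[ℂ] X)} (h : IsRecurrentSet Γ)
    {W : Set X} (hW : IsOpen W) (hWne : W.Nonempty) :
    ∃ (T : ℕ → X →L[ℂ] X) (V : ℕ → Set X), (∀ n, T n ∈ Γ) ∧ (∀ n, (V n).Nonempty) ∧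
      V 0 = W ∧ Antitone V ∧ ∀ n, T n '' V (n + 1) ⊆ V n := by
  have step : ∀ V : {V : Set X // IsOpen V ∧ V.Nonempty}, ∃ T ∈ Γ, (V.1 ∩ T ⁻¹' V.1).Nonempty := by
    rintro ⟨V, hV, hVne⟩
    obtain ⟨T, hT, _, ⟨y, hy, rfl⟩, hTy⟩ := h V hV hVne
    exact ⟨T, hT, y, hy, hTy⟩
  choose T hTΓ hne using step
  let next (V : {V : Set X // IsOpen V ∧ V.Nonempty}) : {V : Set X // IsOpen V ∧ V.Nonempty} :=
    ⟨V.1 ∩ T V ⁻¹' V.1, V.2.1.inter (V.2.1.preimage (T V).continuous), hne V⟩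
  let seq (n : ℕ) : {V : Set X // IsOpen V ∧ V.Nonempty} := Nat.rec ⟨W, hW, hWne⟩ (fun _ => next) n
  refine ⟨fun n => T (seq n), fun n => (seq n).1, fun n => hTΓ _, fun n => (seq n).2.2, rfl,
    antitone_nat_of_succ_le fun n => Set.inter_subset_left, fun n => ?_⟩
  rintro _ ⟨y, hy, rfl⟩
  exact hy.2

lemma exists_mem_prod_Ico_of_chain {G : Set (ℂ × (X →L[ℂ] X))}
    (hG : ∀ p ∈ G, ∀ q ∈ G, p * q ∈ G) {p : ℕ → ℂ × (X →L[ℂ] X)} (hp : ∀ n, p n ∈ G)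
    {V : ℕ → Set X} (hV : ∀ n, (p n).2 '' V (n + 1) ⊆ V n) {i j : ℕ} (hij : i < j) :
    ∃ q ∈ G, q.1 = ∏ m ∈ Finset.Ico i j, (p m).1 ∧ q.2 '' V j ⊆ V i := by
  induction j, Nat.succ_le_of_lt hij using Nat.le_induction with
  | base => exact ⟨p i, hp i, by simp, hV i⟩
  | succ j hij' ih =>
    obtain ⟨q, hqG, hq1, hq2⟩ := ih (Nat.lt_of_succ_le hij')
    refine ⟨q * p j, hG q hqG (p j) (hp j), ?_, ?_⟩
    · rw [Finset.prod_Ico_succ_top (Nat.le_of_succ_le hij'), ← hq1, Prod.fst_mul]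
    · rw [Prod.snd_mul, ContinuousLinearMap.mul_def, ContinuousLinearMap.coe_comp,
        Set.image_comp]
      exact (Set.image_mono (hV j)).trans hq2

theorem IsRecurrentSet.image_smul {G : Set (ℂ × (X →L[ℂ] X))}
    (hG : ∀ p ∈ G, ∀ q ∈ G, p * q ∈ G) (hG₁ : ∀ p ∈ G, ‖p.1‖ = 1)
    (h : IsRecurrentSet (Prod.snd '' G)) :
    IsRecurrentSet ((fun p => p.1 • p.2) '' G) := by
  rintro U hU ⟨x, hx⟩
  obtain ⟨δ, hδ, W, hW, hxW, hWU⟩ :=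
    exists_isOpen_forall_dist_lt_smul_mem (1 : ℂ) hU (by rwa [one_smul])
  have hWU' : W ⊆ U := fun z hz => by simpa using hWU 1 (by simpa using hδ) z hz
  obtain ⟨T, V, hTG, hVne, hV0, hVanti, hTV⟩ := h.exists_antitone_chain hW ⟨x, hxW⟩
  choose p hpG hpT using hTG
  let μ (n : ℕ) : ℂ := ∏ m ∈ Finset.range n, (p m).1
  have hμ (n : ℕ) : ‖μ n‖ = 1 := by
    simp only [μ, norm_prod]
    exact Finset.prod_eq_one fun m _ => hG₁ _ (hpG m)
  obtain ⟨i, j, hij, hμij⟩ := exists_lt_dist_lt_of_isCompact (isCompact_sphere (0 : ℂ) 1)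
    (fun n => mem_sphere_zero_iff_norm.2 (hμ n)) hδ
  obtain ⟨q, hqG, hq1, hq2⟩ := exists_mem_prod_Ico_of_chain hG hpG (fun n => hpT n ▸ hTV n) hij
  have hq_dist : dist q.1 1 < δ := by
    have hμj : μ j = μ i * q.1 := by rw [hq1, Finset.prod_range_mul_prod_Ico _ hij.le]
    rwa [dist_eq_norm, hμj, ← mul_sub_one, norm_mul, hμ, one_mul, ← dist_eq_norm] at hμij
  obtain ⟨z, hz⟩ := hVne j
  have hzW : z ∈ W := hV0 ▸ hVanti (Nat.zero_le j) hz
  have hqzW : q.2 z ∈ W := hV0 ▸ hVanti (Nat.zero_le i) (hq2 ⟨z, hz, rfl⟩)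
  exact ⟨q.1 • q.2, ⟨q, hqG, rfl⟩, q.1 • q.2 z, ⟨z, hWU' hzW, rfl⟩, hWU q.1 hq_dist _ hqzW⟩

theorem isRecurrentSet_snd_image_iff_image_smul {G : Set (ℂ × (X →L[ℂ] X))}
    (hG : ∀ p ∈ G, ∀ q ∈ G, p * q ∈ G) (hG₁ : ∀ p ∈ G, ‖p.1‖ = 1) :
    IsRecurrentSet (Prod.snd '' G) ↔ IsRecurrentSet ((fun p => p.1 • p.2) '' G) := by
  refine ⟨IsRecurrentSet.image_smul hG hG₁, fun h => ?_⟩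
  let G' := (fun p : ℂ × (X →L[ℂ] X) => (p.1⁻¹, p.1 • p.2)) '' G
  have hG' : ∀ p ∈ G', ∀ q ∈ G', p * q ∈ G' := by
    rintro _ ⟨p, hp, rfl⟩ _ ⟨q, hq, rfl⟩
    exact ⟨p * q, hG p hp q hq, by simp [mul_comm, smul_smul]⟩
  have hG'₁ : ∀ p ∈ G', ‖p.1‖ = 1 := by
    rintro _ ⟨p, hp, rfl⟩
    simp [hG₁ p hp]
  have hsnd : Prod.snd '' G' = (fun p => p.1 • p.2) '' G := by
    simp only [G', Set.image_image]
  have hsmul : (fun p => p.1 • p.2) '' G' = Prod.snd '' G := by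
    simp only [G', Set.image_image]
    refine Set.image_congr fun p hp => inv_smul_smul₀ ?_ p.2
    exact norm_ne_zero_iff.1 (by simp [hG₁ p hp])
  rw [← hsmul]
  exact IsRecurrentSet.image_smul hG' hG'₁ (hsnd ▸ h)

end Recurrence

theorem recurrentSet_iff_unimodular_smul_general {X : Type*} [NormedAddCommGroup X]
    [NormedSpace ℂ X] (Γ : Set (X →L[ℂ] X))
    (hΓ : ∀ T ∈ Γ, ∀ S ∈ Γ, T * S ∈ Γ)
    (lam : (X →L[ℂ] X) → ℂ)
    (hmod : ∀ T ∈ Γ, ‖lam T‖ = 1)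
    (hmul : ∀ T ∈ Γ, ∀ S ∈ Γ, lam (T * S) = lam T * lam S) :
    IsRecurrentSet Γ ↔ IsRecurrentSet {A | ∃ T ∈ Γ, A = lam T • T} := by
  let G : Set (ℂ × (X →L[ℂ] X)) := (fun T => (lam T, T)) '' Γ
  have hG : ∀ p ∈ G, ∀ q ∈ G, p * q ∈ G := by
    rintro _ ⟨T, hT, rfl⟩ _ ⟨S, hS, rfl⟩
    exact ⟨T * S, hΓ T hT S hS, by simp [hmul T hT S hS]⟩
  have hG₁ : ∀ p ∈ G, ‖p.1‖ = 1 := by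
    rintro _ ⟨T, hT, rfl⟩
    exact hmod T hT
  have hsnd : Prod.snd '' G = Γ := by simp [G, Set.image_image]
  have hsmul : (fun p => p.1 • p.2) '' G = {A | ∃ T ∈ Γ, A = lam T • T} := by
    ext A
    simp [G, eq_comm]
  rw [← hsmul, ← hsnd]
  exact isRecurrentSet_snd_image_iff_image_smul hG hG₁

theorem recurrentSet_iff_unimodular_smul {X : Type*} [NormedAddCommGroup X]
    [NormedSpace ℂ X] [CompleteSpace X] (Γ : Set (X →L[ℂ] X))
    (hΓ : ∀ T ∈ Γ, ∀ S ∈ Γ, T * S ∈ Γ)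
    (lam : (X →L[ℂ] X) → ℂ)
    (hmod : ∀ T ∈ Γ, ‖lam T‖ = 1)
    (hmul : ∀ T ∈ Γ, ∀ S ∈ Γ, lam (T * S) = lam T * lam S) :
    IsRecurrentSet Γ ↔ IsRecurrentSet {A | ∃ T ∈ Γ, A = lam T • T} :=
  recurrentSet_iff_unimodular_smul_general Γ hΓ lam hmod hmul
end

section
/- Let X and Y be complex Banach spaces, Γ a set of bounded linear operators on X, and Γ₁ a set of bounded linear operators on Y. Suppose Γ is quasi-similar to Γ₁, i.e., there exists a continuous linear map φ : X → Y with dense range such that for every T ∈ Γ there exists S ∈ Γ₁ with S ∘ φ = φ ∘ T. If Γ is recurrent on X, then Γ₁ is recurrent on Y. -/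
open Filter Topology

theorem recurrentSet_of_quasiSimilar {X Y : Type*} [NormedAddCommGroup X]
    [NormedSpace ℂ X] [CompleteSpace X] [NormedAddCommGroup Y] [NormedSpace ℂ Y]
    [CompleteSpace Y] (Γ : Set (X →L[ℂ] X)) (Γ₁ : Set (Y →L[ℂ] Y)) (φ : X →L[ℂ] Y)
    (hd : DenseRange φ)
    (hφ : ∀ T ∈ Γ, ∃ S ∈ Γ₁, ∀ x : X, S (φ x) = φ (T x))
    (hΓ : IsRecurrentSet Γ) :
    IsRecurrentSet Γ₁ := by
  intro U hU hUne
  have hVo : IsOpen (φ ⁻¹' U) := hU.preimage φ.continuous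
  have hVne : (φ ⁻¹' U).Nonempty := by
    obtain ⟨y, hy⟩ := hUne
    obtain ⟨x, hx⟩ := hd.exists_mem_open hU ⟨y, hy⟩
    exact ⟨x, hx⟩
  obtain ⟨T, hT, z, ⟨x, hxU, hxz⟩, hzU⟩ := hΓ (φ ⁻¹' U) hVo hVne
  obtain ⟨S, hS, hSφ⟩ := hφ T hT
  refine ⟨S, hS, S (φ x), ⟨φ x, hxU, rfl⟩, ?_⟩
  rw [hSφ x, hxz]
  exact hzU
end
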